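/- arXiv:2405.20050 — 3 statements merged into one kernel-verified Lean document; each statement's English description precedes it below -/
import Mathlib

section
/- Let h : [0,∞) → ℝ be a decreasing nonnegative measurable function, let R > 0, and let D ⊂ ℝ^N be a measurable set of finite measure contained in the complement of the ball B_R. If r₂ ≥ R satisfies |B_{r₂}| = |D| + |B_R|, then ∫_D h(|x|) dx ≤ ∫_{B_{r₂} \ B_R} h(|x|) dx. -/
open MeasureTheory Metric Set

/-!
Both `D` and the shell `B_{r₂} \ B_R` have measure `|D|`, so the parts `D \ B_{r₂}` and
`(B_{r₂} \ B_R) \ D` where they differ also have equal measure. On the first `|x| ≥ r₂` and on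
the second `|x| < r₂`, so since `h` decreases, `h(|x|) ≤ h(r₂)` on the first and `h(|x|) ≥ h(r₂)`
on the second: moving the mass of `D` outside `B_{r₂}` into the shell can only increase the
integral.
-/

section Exchange

variable {X : Type*} [MeasurableSpace X] {μ : Measure X} {f : X → ℝ} {s t : Set X} {c : ℝ}

theorem setIntegral_le_setIntegral_of_measure_eq_of_le_of_le (hs : MeasurableSet s)
    (ht : MeasurableSet t) (hfs : IntegrableOn f s μ) (hft : IntegrableOn f t μ)
    (hμ : μ s = μ t) (hμs : μ s ≠ ⊤) (hle : ∀ x ∈ s \ t, f x ≤ c)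
    (hge : ∀ x ∈ t \ s, c ≤ f x) :
    ∫ x in s, f x ∂μ ≤ ∫ x in t, f x ∂μ := by
  have hμst : μ (s \ t) = μ (t \ s) :=
    measure_sdiff_symm hs.nullMeasurableSet ht.nullMeasurableSet hμ
      (measure_ne_top_of_subset inter_subset_left hμs)
  have hμs_t : μ (s \ t) ≠ ⊤ := measure_ne_top_of_subset sdiff_subset hμs
  have h_removed : ∫ x in s \ t, f x ∂μ ≤ c * μ.real (t \ s) := by
    calc ∫ x in s \ t, f x ∂μ ≤ ∫ _ in s \ t, c ∂μ :=
          setIntegral_mono_on (hfs.mono_set sdiff_subset) (integrableOn_const hμs_t)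
            (hs.diff ht) hle
      _ = c * μ.real (t \ s) := by
          rw [setIntegral_const, smul_eq_mul, mul_comm, measureReal_def, hμst, measureReal_def]
  have h_added : c * μ.real (t \ s) ≤ ∫ x in t \ s, f x ∂μ :=
    setIntegral_ge_of_const_le_real (ht.diff hs) (hμst ▸ hμs_t) hge (hft.mono_set sdiff_subset)
  have h_common : ∫ x in s ∩ t, f x ∂μ = ∫ x in t ∩ s, f x ∂μ := by rw [inter_comm]
  rw [← integral_inter_add_sdiff ht hfs, ← integral_inter_add_sdiff hs hft, h_common]
  linarith

end Exchange

theorem integrableOn_comp_norm_of_antitoneOn {E : Type*} [NormedAddCommGroup E]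
    [MeasurableSpace E] [OpensMeasurableSpace E] {μ : Measure E} {h : ℝ → ℝ}
    (hmeas : Measurable h) (hnonneg : ∀ r, 0 ≤ r → 0 ≤ h r) (hdec : AntitoneOn h (Ici 0))
    {s : Set E} (hs : μ s ≠ ⊤) :
    IntegrableOn (fun x => h ‖x‖) s μ := by
  refine Measure.integrableOn_of_bounded (M := h 0) hs
    (hmeas.comp measurable_norm).aestronglyMeasurable (ae_of_all _ fun x => ?_)
  rw [Real.norm_eq_abs, abs_of_nonneg (hnonneg _ (norm_nonneg x))]
  exact hdec self_mem_Ici (norm_nonneg x) (norm_nonneg x)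

theorem mass_displacement_outside_general (N : ℕ)
    (h : ℝ → ℝ) (hmeas : Measurable h) (hnonneg : ∀ r, 0 ≤ r → 0 ≤ h r)
    (hdec : AntitoneOn h (Ici 0))
    (R : ℝ) (hR : 0 < R)
    (D : Set (EuclideanSpace ℝ (Fin N))) (hD : MeasurableSet D)
    (hDfin : volume D < ⊤)
    (hDR : D ⊆ (ball (0 : EuclideanSpace ℝ (Fin N)) R)ᶜ)
    (r₂ : ℝ) (hr₂ : R ≤ r₂)
    (hvol : volume (ball (0 : EuclideanSpace ℝ (Fin N)) r₂)
      = volume D + volume (ball (0 : EuclideanSpace ℝ (Fin N)) R)) :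
    ∫ x in D, h ‖x‖
      ≤ ∫ x in ball (0 : EuclideanSpace ℝ (Fin N)) r₂ \ ball (0 : EuclideanSpace ℝ (Fin N)) R,
          h ‖x‖ := by
  have hr₂_nonneg : 0 ≤ r₂ := hR.le.trans hr₂
  have hshell : volume D = volume (ball (0 : EuclideanSpace ℝ (Fin N)) r₂ \ ball 0 R) := by
    rw [measure_sdiff (ball_subset_ball hr₂) measurableSet_ball.nullMeasurableSet
      measure_ball_lt_top.ne, hvol, ENNReal.add_sub_cancel_right measure_ball_lt_top.ne]
  refine setIntegral_le_setIntegral_of_measure_eq_of_le_of_le (c := h r₂) hD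
    (measurableSet_ball.diff measurableSet_ball)
    (integrableOn_comp_norm_of_antitoneOn hmeas hnonneg hdec hDfin.ne)
    (integrableOn_comp_norm_of_antitoneOn hmeas hnonneg hdec (hshell ▸ hDfin.ne))
    hshell hDfin.ne (fun x ⟨hxD, hx⟩ => ?_) (fun x ⟨⟨hx, _⟩, _⟩ => ?_)
  · have hr₂x : r₂ ≤ ‖x‖ := by
      by_contra hlt
      exact hx ⟨mem_ball_zero_iff.mpr (not_le.mp hlt), hDR hxD⟩
    exact hdec hr₂_nonneg (hr₂_nonneg.trans hr₂x) hr₂x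
  · exact hdec (norm_nonneg x) hr₂_nonneg (mem_ball_zero_iff.mp hx).le

/-- Mass displacement outside the ball: if `D ⊆ B_Rᶜ` has finite measure and
`|B_{r₂}| = |D| + |B_R|`, then `∫_D h(|x|) dx ≤ ∫_{B_{r₂} \ B_R} h(|x|) dx`
for a decreasing nonnegative radial integrand. -/
theorem mass_displacement_outside (N : ℕ) (hN : 1 ≤ N)
    (h : ℝ → ℝ) (hmeas : Measurable h) (hnonneg : ∀ r, 0 ≤ r → 0 ≤ h r)
    (hdec : AntitoneOn h (Ici 0))
    (R : ℝ) (hR : 0 < R)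
    (D : Set (EuclideanSpace ℝ (Fin N))) (hD : MeasurableSet D)
    (hDfin : volume D < ⊤)
    (hDR : D ⊆ (ball (0 : EuclideanSpace ℝ (Fin N)) R)ᶜ)
    (r₂ : ℝ) (hr₂ : R ≤ r₂)
    (hvol : volume (ball (0 : EuclideanSpace ℝ (Fin N)) r₂)
      = volume D + volume (ball (0 : EuclideanSpace ℝ (Fin N)) R)) :
    ∫ x in D, h ‖x‖
      ≤ ∫ x in ball (0 : EuclideanSpace ℝ (Fin N)) r₂ \ ball (0 : EuclideanSpace ℝ (Fin N)) R,
          h ‖x‖ :=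
  mass_displacement_outside_general N h hmeas hnonneg hdec R hR D hD hDfin hDR r₂ hr₂ hvol
end

section
/- Suppose A, B ∈ ℝ^N with 0 < |A − B| and let r > 0. If the balls B(A, r) and B(B, r) intersect, set l := 2r − |A − B| (the width of the lens B(A,r) ∩ B(B,r) in the direction (B−A)/|B−A|). Then there exist constants c_N, C_N > 0 depending only on N such that c_N l^{(N+1)/2} r^{(N−1)/2} ≤ |B(A,r) ∩ B(B,r)| ≤ C_N l^{(N+1)/2} r^{(N−1)/2}, provided 0 ≤ l ≤ r. -/
/-!
After an isometry, the centers are `∓h • e₀` with `h = r - l/2`. A point `(t, y)` of the lens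
then satisfies `|t| < l/2` and `‖y‖² < r² - h² ≤ r l`, so the lens lies in a box of volume
`l (2√(r l))^(N-1)`; conversely, since `l ≤ r`, the box `|t| < l/4`, `|yᵢ| < √(r l / (4N))` lies in
the lens. Both boxes have volume comparable to `l · (r l)^((N-1)/2) = l^((N+1)/2) r^((N-1)/2)`.
-/

open MeasureTheory Metric

theorem volume_ball_inter_ball_congr {E : Type*} [NormedAddCommGroup E] [InnerProductSpace ℝ E]
    [FiniteDimensional ℝ E] [MeasurableSpace E] [BorelSpace E]
    {A B A' B' : E} (h : dist A B = dist A' B') (r : ℝ) :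
    volume (ball A r ∩ ball B r) = volume (ball A' r ∩ ball B' r) := by
  set M := midpoint ℝ A B
  set M' := midpoint ℝ A' B'
  set ρ := (ℝ ∙ ((B - M) - (B' - M')))ᗮ.reflection
  have hρB : ρ (B - M) = B' - M' := by
    apply Submodule.reflection_sub
    rw [← dist_eq_norm, ← dist_eq_norm, dist_right_midpoint, dist_right_midpoint, h]
  have hρA : ρ (A - M) = A' - M' := by
    have h_opp {P Q : E} : P - midpoint ℝ P Q = -(Q - midpoint ℝ P Q) := by
      rw [left_sub_midpoint, right_sub_midpoint, ← smul_neg, neg_sub]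
    rw [h_opp, map_neg, hρB, ← h_opp]
  set φ : E → E := fun x => ρ (x - M) + M'
  have hφ : MeasurePreserving φ volume volume :=
    (measurePreserving_add_right volume M').comp
      (ρ.measurePreserving.comp (measurePreserving_sub_right volume M))
  have hpre : φ ⁻¹' (ball A' r ∩ ball B' r) = ball A r ∩ ball B r := by
    have hφA : φ A = A' := by simp only [φ, hρA, sub_add_cancel]
    have hφB : φ B = B' := by simp only [φ, hρB, sub_add_cancel]
    ext x
    simp only [Set.mem_inter_iff, Set.mem_preimage, mem_ball, ← hφA, ← hφB, φ, dist_add_right,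
      ρ.dist_map, dist_sub_right]
  rw [← hpre, hφ.measure_preimage (isOpen_ball.inter isOpen_ball).measurableSet.nullMeasurableSet]

namespace EuclideanSpace

variable {ι : Type*} [Fintype ι]

theorem volume_setOf_abs_lt (w : ι → ℝ) :
    volume {x : EuclideanSpace ℝ ι | ∀ i, |x i| < w i} = ∏ i, ENNReal.ofReal (2 * w i) := by
  have hpre : {x : EuclideanSpace ℝ ι | ∀ i, |x i| < w i} =
      WithLp.ofLp ⁻¹' Set.univ.pi fun i => Set.Ioo (-w i) (w i) := by
    ext x
    simp [abs_lt]
  rw [hpre, (PiLp.volume_preserving_ofLp ι).measure_preimage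
    (MeasurableSet.univ_pi fun _ => measurableSet_Ioo).nullMeasurableSet, Real.volume_pi_Ioo]
  simp only [sub_neg_eq_add, two_mul]

def axisBox (i₀ : ι) (a b : ℝ) : Set (EuclideanSpace ℝ ι) :=
  {x | |x i₀| < a ∧ ∀ i ≠ i₀, |x i| < b}

variable [DecidableEq ι]

theorem volume_axisBox (i₀ : ι) (a b : ℝ) :
    volume (axisBox i₀ a b) =
      ENNReal.ofReal (2 * a) * ENNReal.ofReal (2 * b) ^ (Fintype.card ι - 1) := by
  have hbox : axisBox i₀ a b = {x | ∀ i, |x i| < Function.update (fun _ => b) i₀ a i} := by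
    ext x
    refine ⟨fun ⟨h₀, h⟩ i => ?_,
      fun h => ⟨by simpa using h i₀, fun i hi => by simpa [hi] using h i⟩⟩
    rcases eq_or_ne i i₀ with rfl | hi
    · simpa using h₀
    · simpa [hi] using h i hi
  rw [hbox, volume_setOf_abs_lt, ← Finset.mul_prod_erase _ _ (Finset.mem_univ i₀),
    Finset.prod_congr rfl fun i hi => by rw [Function.update_of_ne (Finset.ne_of_mem_erase hi)],
    Finset.prod_const, Finset.card_erase_of_mem (Finset.mem_univ i₀), Finset.card_univ,
    Function.update_self]

theorem volume_real_axisBox (i₀ : ι) {a b : ℝ} (ha : 0 ≤ a) (hb : 0 ≤ b) :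
    volume.real (axisBox i₀ a b) = 2 * a * (2 * b) ^ (Fintype.card ι - 1) := by
  rw [measureReal_def, volume_axisBox, ENNReal.toReal_mul, ENNReal.toReal_pow,
    ENNReal.toReal_ofReal (by positivity), ENNReal.toReal_ofReal (by positivity)]

theorem dist_single_sq (x : EuclideanSpace ℝ ι) (i₀ : ι) (c : ℝ) :
    dist x (single i₀ c) ^ 2 = (x i₀ - c) ^ 2 + ∑ i ∈ Finset.univ.erase i₀, x i ^ 2 := by
  rw [EuclideanSpace.dist_eq, Real.sq_sqrt (by positivity),
    ← Finset.add_sum_erase _ _ (Finset.mem_univ i₀),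
    Finset.sum_congr rfl fun i hi => by
      rw [PiLp.single_apply, if_neg (Finset.ne_of_mem_erase hi)]]
  simp [Real.dist_eq, sq_abs]

theorem mem_ball_single_iff {x : EuclideanSpace ℝ ι} {i₀ : ι} {c r : ℝ} (hr : 0 ≤ r) :
    x ∈ ball (single i₀ c) r ↔ (x i₀ - c) ^ 2 + ∑ i ∈ Finset.univ.erase i₀, x i ^ 2 < r ^ 2 := by
  rw [mem_ball, ← pow_lt_pow_iff_left₀ dist_nonneg hr two_ne_zero, dist_single_sq]

theorem ball_inter_ball_subset_axisBox (i₀ : ι) {h r : ℝ} (hr : 0 ≤ r) :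
    ball (single i₀ (-h)) r ∩ ball (single i₀ h) r ⊆ axisBox i₀ (r - h) √(r ^ 2 - h ^ 2) := by
  rintro x ⟨hA, hB⟩
  rw [mem_ball_single_iff hr, sub_neg_eq_add] at hA
  rw [mem_ball_single_iff hr] at hB
  set S := ∑ i ∈ Finset.univ.erase i₀, x i ^ 2
  have hS : 0 ≤ S := Finset.sum_nonneg fun i _ => sq_nonneg (x i)
  have hfar : (|x i₀| + h) ^ 2 + S < r ^ 2 := by
    rcases abs_cases (x i₀) with ⟨habs, _⟩ | ⟨habs, _⟩
    · rwa [habs]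
    · rw [habs]; linarith [show (-x i₀ + h) ^ 2 = (x i₀ - h) ^ 2 by ring]
  have ht : |x i₀| + h < r := lt_of_pow_lt_pow_left₀ 2 hr (by linarith)
  have hS' : S < r ^ 2 - h ^ 2 := by nlinarith [abs_nonneg (x i₀)]
  refine ⟨by linarith, fun i hi => ?_⟩
  rw [Real.lt_sqrt (abs_nonneg _), sq_abs]
  exact (Finset.single_le_sum (fun j _ => sq_nonneg (x j))
    (Finset.mem_erase.2 ⟨hi, Finset.mem_univ i⟩)).trans_lt hS'

theorem axisBox_subset_ball_inter_ball (i₀ : ι) {a b h r : ℝ} (hh : 0 ≤ h) (hr : 0 ≤ r)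
    (hab : (a + h) ^ 2 + Fintype.card ι * b ^ 2 ≤ r ^ 2) :
    axisBox i₀ a b ⊆ ball (single i₀ (-h)) r ∩ ball (single i₀ h) r := by
  rintro x ⟨ht, hx⟩
  have hS : ∑ i ∈ Finset.univ.erase i₀, x i ^ 2 ≤ Fintype.card ι * b ^ 2 :=
    calc ∑ i ∈ Finset.univ.erase i₀, x i ^ 2
        ≤ ∑ i ∈ Finset.univ.erase i₀, b ^ 2 := Finset.sum_le_sum fun i hi => by
          rw [← sq_abs]
          exact pow_le_pow_left₀ (abs_nonneg _) (hx i (Finset.ne_of_mem_erase hi)).le 2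
      _ ≤ ∑ _i, b ^ 2 := Finset.sum_le_sum_of_subset_of_nonneg (Finset.erase_subset _ _)
          fun _ _ _ => sq_nonneg b
      _ = Fintype.card ι * b ^ 2 := by simp
  have hnear : ∀ c, |c| = h → (x i₀ - c) ^ 2 < (a + h) ^ 2 := fun c hc => by
    rw [← sq_abs]
    refine pow_lt_pow_left₀ ?_ (abs_nonneg _) two_ne_zero
    linarith [abs_sub (x i₀) c]
  constructor <;> rw [mem_ball_single_iff hr]
  · linarith [hnear (-h) (by rw [abs_neg, abs_of_nonneg hh])]
  · linarith [hnear h (abs_of_nonneg hh)]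

variable [Nonempty ι]

theorem volume_real_ball_inter_ball_le {A B : EuclideanSpace ℝ ι} {r l : ℝ}
    (hAB : dist A B = 2 * r - l) (hl : 0 ≤ l) :
    volume.real (ball A r ∩ ball B r) ≤
      2 ^ (Fintype.card ι - 1) * (l * √(r * l) ^ (Fintype.card ι - 1)) := by
  obtain ⟨i₀⟩ := ‹Nonempty ι›
  have hAB₀ : 0 ≤ dist A B := dist_nonneg
  have hr : 0 ≤ r := by linarith
  set h := r - l / 2 with hh
  have haxis : dist (single i₀ (-h)) (single i₀ h : EuclideanSpace ℝ ι) = dist A B := by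
    rw [PiLp.dist_single_same, Real.dist_eq, hAB, abs_of_nonpos (by linarith)]
    ring
  have hwidth : r ^ 2 - h ^ 2 ≤ r * l := by nlinarith
  calc volume.real (ball A r ∩ ball B r)
      = volume.real (ball (single i₀ (-h)) r ∩ ball (single i₀ h) r) := by
        rw [measureReal_def, measureReal_def, volume_ball_inter_ball_congr haxis.symm]
    _ ≤ volume.real (axisBox i₀ (r - h) √(r ^ 2 - h ^ 2)) :=
        measureReal_mono (ball_inter_ball_subset_axisBox i₀ hr)
          (by rw [volume_axisBox]; finiteness)
    _ = l * (2 * √(r ^ 2 - h ^ 2)) ^ (Fintype.card ι - 1) := by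
        rw [volume_real_axisBox i₀ (by linarith) (Real.sqrt_nonneg _)]
        ring
    _ ≤ l * (2 * √(r * l)) ^ (Fintype.card ι - 1) := by gcongr
    _ = 2 ^ (Fintype.card ι - 1) * (l * √(r * l) ^ (Fintype.card ι - 1)) := by
        rw [mul_pow]; ring

theorem le_volume_real_ball_inter_ball {A B : EuclideanSpace ℝ ι} {r l : ℝ}
    (hAB : dist A B = 2 * r - l) (hl : 0 ≤ l) (hlr : l ≤ r) :
    (2 * √(Fintype.card ι) ^ (Fintype.card ι - 1))⁻¹ * (l * √(r * l) ^ (Fintype.card ι - 1)) ≤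
      volume.real (ball A r ∩ ball B r) := by
  obtain ⟨i₀⟩ := ‹Nonempty ι›
  set n := Fintype.card ι
  have hn : (0 : ℝ) < n := by exact_mod_cast Fintype.card_pos
  have hr : 0 ≤ r := hl.trans hlr
  set h := r - l / 2 with hh
  have haxis : dist (single i₀ (-h)) (single i₀ h : EuclideanSpace ℝ ι) = dist A B := by
    rw [PiLp.dist_single_same, Real.dist_eq, hAB, abs_of_nonpos (by linarith)]
    ring
  set b := √(r * l) / (2 * √n) with hb
  have hfit : (l / 4 + h) ^ 2 + n * b ^ 2 ≤ r ^ 2 := by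
    have hnb : n * b ^ 2 = r * l / 4 := by
      rw [hb, div_pow, mul_pow, Real.sq_sqrt (by positivity), Real.sq_sqrt hn.le]
      field_simp
      ring
    rw [hnb]
    nlinarith
  calc (2 * √n ^ (n - 1))⁻¹ * (l * √(r * l) ^ (n - 1))
      = volume.real (axisBox i₀ (l / 4) b) := by
        rw [volume_real_axisBox i₀ (by linarith) (by rw [hb]; positivity), hb,
          show 2 * (√(r * l) / (2 * √n)) = √(r * l) / √n by field_simp, div_pow]
        field_simp
        ring
    _ ≤ volume.real (ball (single i₀ (-h)) r ∩ ball (single i₀ h) r) :=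
        measureReal_mono (axisBox_subset_ball_inter_ball i₀ (by linarith) (by linarith) hfit)
    _ = volume.real (ball A r ∩ ball B r) := by
        rw [measureReal_def, measureReal_def, volume_ball_inter_ball_congr haxis]

end EuclideanSpace

theorem mul_sqrt_mul_pow_pred_eq_rpow {n : ℕ} (hn : 1 ≤ n) {r l : ℝ} (hr : 0 ≤ r) (hl : 0 ≤ l) :
    l * √(r * l) ^ (n - 1) = l ^ (((n : ℝ) + 1) / 2) * r ^ (((n : ℝ) - 1) / 2) := by
  have hn' : (1 : ℝ) ≤ n := by exact_mod_cast hn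
  have hsqrt : √(r * l) ^ (n - 1) = (r * l) ^ (((n : ℝ) - 1) / 2) := by
    rw [Real.rpow_div_two_eq_sqrt _ (by positivity), ← Real.rpow_natCast, Nat.cast_sub hn,
      Nat.cast_one]
  rw [hsqrt, Real.mul_rpow hr hl, show ((n : ℝ) + 1) / 2 = 1 + ((n : ℝ) - 1) / 2 by ring,
    Real.rpow_one_add' hl (by linarith)]
  ring

theorem lens_volume_estimate_general (N : ℕ) :
    ∃ c C : ℝ, 0 < c ∧ 0 < C ∧
      ∀ (A B : EuclideanSpace ℝ (Fin N)) (r : ℝ), 0 < r → 0 < dist A B →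
        dist A B < 2 * r →
        ∀ l : ℝ, l = 2 * r - dist A B → l ≤ r →
          c * l ^ (((N : ℝ) + 1) / 2) * r ^ (((N : ℝ) - 1) / 2)
              ≤ (volume (ball A r ∩ ball B r)).toReal ∧
            (volume (ball A r ∩ ball B r)).toReal
              ≤ C * l ^ (((N : ℝ) + 1) / 2) * r ^ (((N : ℝ) - 1) / 2) := by
  rcases N.eq_zero_or_pos with rfl | hN
  · exact ⟨1, 1, one_pos, one_pos,
      fun A B _ _ hAB => absurd (Subsingleton.elim A B) (dist_pos.1 hAB)⟩
  have : Nonempty (Fin N) := ⟨⟨0, hN⟩⟩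
  have hN' : (0 : ℝ) < N := Nat.cast_pos.2 hN
  refine ⟨(2 * √N ^ (N - 1))⁻¹, 2 ^ (N - 1), by positivity, by positivity,
    fun A B r hr _ hlt l hl hlr => ?_⟩
  have hAB : dist A B = 2 * r - l := by linarith
  have hl0 : 0 ≤ l := by linarith
  have hpow := mul_sqrt_mul_pow_pred_eq_rpow hN hr.le hl0
  have hlower := EuclideanSpace.le_volume_real_ball_inter_ball hAB hl0 hlr
  have hupper := EuclideanSpace.volume_real_ball_inter_ball_le hAB hl0
  rw [Fintype.card_fin, hpow, ← mul_assoc] at hlower hupper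
  exact ⟨hlower, hupper⟩

/-- Volume of the lens formed by two balls of equal radius `r` with centers at distance
`2r − l`: it is comparable to `l^{(N+1)/2} r^{(N−1)/2}` when `0 ≤ l ≤ r`. -/
theorem lens_volume_estimate (N : ℕ) (hN : 1 ≤ N) :
    ∃ c C : ℝ, 0 < c ∧ 0 < C ∧
      ∀ (A B : EuclideanSpace ℝ (Fin N)) (r : ℝ), 0 < r → 0 < dist A B →
        dist A B < 2 * r →
        ∀ l : ℝ, l = 2 * r - dist A B → l ≤ r →
          c * l ^ (((N : ℝ) + 1) / 2) * r ^ (((N : ℝ) - 1) / 2)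
              ≤ (volume (ball A r ∩ ball B r)).toReal ∧
            (volume (ball A r ∩ ball B r)).toReal
              ≤ C * l ^ (((N : ℝ) + 1) / 2) * r ^ (((N : ℝ) - 1) / 2) :=
  lens_volume_estimate_general N
end

section
/- Let f : (0,∞) → ℝ be nonnegative and decreasing, let R > 0, r₁ ∈ [0,R], r₂ ≥ R with |B_{r₂}| = |B_R| + |D₂| where D₂ ⊂ B_R^c and |D₁| = |B_{r₁}| with D₁ ⊂ B_R. Then ∫_{B_R} f(|x|)dx − ∫_{D₁} f(|x|)dx − ∫_{D₂} f(|x|)dx ≥ ∫_{B_R \ B_{r₁}} f(|x|)dx − ∫_{B_{r₂} \ B_R} f(|x|)dx. -/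
/-!
Both displaced masses are compared with the radial rearrangements of the same volume by a
bathtub argument: moving mass of `x ↦ f ‖x‖` across a sphere `‖x‖ = ρ` toward the origin can
only increase its integral, since `f` is decreasing. `D₁` has the volume of `B_{r₁}`, so
`∫_{D₁} ≤ ∫_{B_{r₁}}`; `D₂` lies outside `B_R` and has the volume of the annulus
`B_{r₂} \ B_R`, so `∫_{D₂} ≤ ∫_{B_{r₂} \ B_R}`. Splitting `B_R` into `B_{r₁}` and
`B_R \ B_{r₁}` gives the claim.
-/

open MeasureTheory Metric Set

theorem setIntegral_le_setIntegral_of_measure_eq {α : Type*} [MeasurableSpace α]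
    {μ : Measure α} {s t : Set α} {g : α → ℝ} (c : ℝ)
    (hs : MeasurableSet s) (ht : MeasurableSet t) (hμ : μ s = μ t) (hμt : μ t ≠ ⊤)
    (hgs : IntegrableOn g s μ) (hgt : IntegrableOn g t μ)
    (hsc : ∀ᵐ x ∂μ, x ∈ s \ t → g x ≤ c) (hct : ∀ᵐ x ∂μ, x ∈ t \ s → c ≤ g x) :
    ∫ x in s, g x ∂μ ≤ ∫ x in t, g x ∂μ := by
  have hμts : μ (t \ s) ≠ ⊤ := measure_ne_top_of_subset sdiff_subset hμt
  have hμst : μ (s \ t) = μ (t \ s) :=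
    measure_sdiff_symm hs.nullMeasurableSet ht.nullMeasurableSet hμ
      (measure_ne_top_of_subset inter_subset_right hμt)
  have hdiff : ∫ x in s \ t, g x ∂μ ≤ ∫ x in t \ s, g x ∂μ :=
    calc ∫ x in s \ t, g x ∂μ ≤ ∫ _ in s \ t, c ∂μ :=
          setIntegral_mono_on_ae (hgs.mono_set sdiff_subset)
            (integrableOn_const (hμst ▸ hμts)) (hs.diff ht) hsc
      _ = ∫ _ in t \ s, c ∂μ := by simp only [setIntegral_const, measureReal_def, hμst]
      _ ≤ ∫ x in t \ s, g x ∂μ :=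
          setIntegral_mono_on_ae (integrableOn_const hμts) (hgt.mono_set sdiff_subset)
            (ht.diff hs) hct
  have hs_split := integral_inter_add_sdiff ht hgs
  have ht_split := integral_inter_add_sdiff hs hgt
  rw [inter_comm] at ht_split
  linarith

section Radial

variable {E : Type*} [NormedAddCommGroup E] [MeasurableSpace E] {μ : Measure E} {f : ℝ → ℝ}

theorem setIntegral_comp_norm_le_of_measure_eq [NullSingletonClass μ]
    (hf : AntitoneOn f (Ioi 0)) {s t : Set E} {ρ : ℝ} (hρ : 0 < ρ)
    (hs : MeasurableSet s) (ht : MeasurableSet t) (hμ : μ s = μ t)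
    (hμt : μ t ≠ ⊤) (hgs : IntegrableOn (fun x => f ‖x‖) s μ)
    (hgt : IntegrableOn (fun x => f ‖x‖) t μ)
    (hst : ∀ x ∈ s \ t, ρ ≤ ‖x‖) (hts : ∀ x ∈ t \ s, ‖x‖ ≤ ρ) :
    ∫ x in s, f ‖x‖ ∂μ ≤ ∫ x in t, f ‖x‖ ∂μ := by
  refine setIntegral_le_setIntegral_of_measure_eq (f ρ) hs ht hμ hμt hgs hgt
    (ae_of_all _ fun x hx => hf hρ (hρ.trans_le (hst x hx)) (hst x hx)) ?_
  filter_upwards [Measure.ae_ne μ 0] with x hx0 hx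
  exact hf (norm_pos_iff.2 hx0) hρ (hts x hx)

theorem setIntegral_comp_norm_le_setIntegral_ball [OpensMeasurableSpace E]
    [NullSingletonClass μ] (hf : AntitoneOn f (Ioi 0)) {D : Set E} {r : ℝ}
    (hD : MeasurableSet D) (hvol : μ (ball 0 r) = μ D) (hfin : μ (ball 0 r) ≠ ⊤)
    (hgD : IntegrableOn (fun x => f ‖x‖) D μ)
    (hgB : IntegrableOn (fun x => f ‖x‖) (ball 0 r) μ) :
    ∫ x in D, f ‖x‖ ∂μ ≤ ∫ x in ball 0 r, f ‖x‖ ∂μ := by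
  rcases le_or_gt r 0 with hr | hr
  · have hD0 : μ D = 0 := by rw [← hvol, ball_eq_empty.2 hr, measure_empty]
    simp [Measure.restrict_eq_zero.2 hD0, ball_eq_empty.2 hr]
  refine setIntegral_comp_norm_le_of_measure_eq hf hr hD measurableSet_ball hvol.symm hfin
    hgD hgB (fun x hx => ?_) fun x hx => (mem_ball_zero_iff.1 hx.1).le
  simpa using hx.2

theorem setIntegral_comp_norm_le_setIntegral_annulus [OpensMeasurableSpace E]
    [NullSingletonClass μ] (hf : AntitoneOn f (Ioi 0))
    {D : Set E} {R r : ℝ} (hr : 0 < r) (hRr : R ≤ r) (hD : MeasurableSet D)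
    (hDR : D ⊆ (ball 0 R)ᶜ) (hvol : μ (ball 0 r) = μ (ball 0 R) + μ D)
    (hfin : μ (ball 0 r) ≠ ⊤) (hgD : IntegrableOn (fun x => f ‖x‖) D μ)
    (hgA : IntegrableOn (fun x => f ‖x‖) (ball 0 r \ ball 0 R) μ) :
    ∫ x in D, f ‖x‖ ∂μ ≤ ∫ x in ball 0 r \ ball 0 R, f ‖x‖ ∂μ := by
  have hfinR : μ (ball (0 : E) R) ≠ ⊤ := measure_ne_top_of_subset (ball_subset_ball hRr) hfin
  have hμA : μ D = μ (ball 0 r \ ball 0 R) := by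
    rw [measure_sdiff (ball_subset_ball hRr) measurableSet_ball.nullMeasurableSet hfinR, hvol,
      ENNReal.add_sub_cancel_left hfinR]
  refine setIntegral_comp_norm_le_of_measure_eq hf hr hD
    (measurableSet_ball.diff measurableSet_ball) hμA
    (measure_ne_top_of_subset sdiff_subset hfin) hgD hgA (fun x hx => ?_)
    fun x hx => (mem_ball_zero_iff.1 hx.1.1).le
  have hxR : x ∉ ball 0 R := hDR hx.1
  have hxr : x ∉ ball 0 r := fun h => hx.2 ⟨h, hxR⟩
  simpa using hxr

theorem integrableOn_comp_norm_of_integrableOn_ball [OpensMeasurableSpace E]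
    (hmeas : Measurable f) (hnonneg : ∀ r, 0 < r → 0 ≤ f r) (hf : AntitoneOn f (Ioi 0))
    {s : Set E} {ρ : ℝ} (hρ : 0 < ρ) (hs : MeasurableSet s) (hμs : μ s ≠ ⊤)
    (hint : IntegrableOn (fun x => f ‖x‖) (ball 0 ρ) μ) :
    IntegrableOn (fun x => f ‖x‖) s μ := by
  have hout : IntegrableOn (fun x => f ‖x‖) (s \ ball 0 ρ) μ := by
    refine Measure.integrableOn_of_bounded (M := f ρ)
      (measure_ne_top_of_subset sdiff_subset hμs)
      (hmeas.comp measurable_norm).aestronglyMeasurable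
      ((ae_restrict_iff' (hs.diff measurableSet_ball)).2 (ae_of_all _ fun x hx => ?_))
    have hρx : ρ ≤ ‖x‖ := by simpa using hx.2
    rw [Real.norm_of_nonneg (hnonneg _ (hρ.trans_le hρx))]
    exact hf hρ (hρ.trans_le hρx) hρx
  exact (hout.union hint).mono_set (subset_sdiff_union s _)

end Radial

theorem combined_mass_displacement_general (N : ℕ) (hN : 1 ≤ N)
    (f : ℝ → ℝ) (hmeas : Measurable f) (hnonneg : ∀ r, 0 < r → 0 ≤ f r)
    (hdec : AntitoneOn f (Ioi 0))
    (R r₁ r₂ : ℝ) (hR : 0 < R) (hr₁R : r₁ ≤ R) (hr₂ : R ≤ r₂)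
    (D₁ D₂ : Set (EuclideanSpace ℝ (Fin N)))
    (hD₁ : MeasurableSet D₁) (hD₂ : MeasurableSet D₂)
    (hD₁R : D₁ ⊆ ball (0 : EuclideanSpace ℝ (Fin N)) R)
    (hD₂R : D₂ ⊆ (ball (0 : EuclideanSpace ℝ (Fin N)) R)ᶜ)
    (hD₂fin : volume D₂ < ⊤)
    (hvol₁ : volume (ball (0 : EuclideanSpace ℝ (Fin N)) r₁) = volume D₁)
    (hvol₂ : volume (ball (0 : EuclideanSpace ℝ (Fin N)) r₂)
      = volume (ball (0 : EuclideanSpace ℝ (Fin N)) R) + volume D₂)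
    (hint : IntegrableOn (fun x => f ‖x‖) (ball (0 : EuclideanSpace ℝ (Fin N)) r₂)) :
    (∫ x in ball (0 : EuclideanSpace ℝ (Fin N)) R, f ‖x‖)
        - (∫ x in D₁, f ‖x‖) - (∫ x in D₂, f ‖x‖)
      ≥ (∫ x in ball (0 : EuclideanSpace ℝ (Fin N)) R
            \ ball (0 : EuclideanSpace ℝ (Fin N)) r₁, f ‖x‖)
        - ∫ x in ball (0 : EuclideanSpace ℝ (Fin N)) r₂
            \ ball (0 : EuclideanSpace ℝ (Fin N)) R, f ‖x‖ := by
  -- makes `volume` atomless, i.e. provides `NullSingletonClass volume`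
  have : Nonempty (Fin N) := ⟨⟨0, hN⟩⟩
  have hball_fin (r : ℝ) : volume (ball (0 : EuclideanSpace ℝ (Fin N)) r) ≠ ⊤ :=
    measure_ball_lt_top.ne
  have hintR := hint.mono_set (ball_subset_ball hr₂)
  have hr₂pos := hR.trans_le hr₂
  have hinner := setIntegral_comp_norm_le_setIntegral_ball hdec hD₁ hvol₁ (hball_fin r₁)
    (hintR.mono_set hD₁R) (hintR.mono_set (ball_subset_ball hr₁R))
  have houter := setIntegral_comp_norm_le_setIntegral_annulus hdec hr₂pos hr₂ hD₂ hD₂R hvol₂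
    (hball_fin r₂)
    (integrableOn_comp_norm_of_integrableOn_ball hmeas hnonneg hdec hr₂pos hD₂
      hD₂fin.ne hint)
    (hint.mono_set sdiff_subset)
  have hsplit := integral_inter_add_sdiff measurableSet_ball hintR (t := ball 0 r₁)
  rw [inter_eq_right.2 (ball_subset_ball hr₁R)] at hsplit
  linarith

/-- Combined mass displacement bound:
`∫_{B_R} f − ∫_{D₁} f − ∫_{D₂} f ≥ ∫_{B_R \ B_{r₁}} f − ∫_{B_{r₂} \ B_R} f`. -/
theorem combined_mass_displacement (N : ℕ) (hN : 1 ≤ N)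
    (f : ℝ → ℝ) (hmeas : Measurable f) (hnonneg : ∀ r, 0 < r → 0 ≤ f r)
    (hdec : AntitoneOn f (Ioi 0))
    (R r₁ r₂ : ℝ) (hR : 0 < R) (hr₁ : 0 ≤ r₁) (hr₁R : r₁ ≤ R) (hr₂ : R ≤ r₂)
    (D₁ D₂ : Set (EuclideanSpace ℝ (Fin N)))
    (hD₁ : MeasurableSet D₁) (hD₂ : MeasurableSet D₂)
    (hD₁R : D₁ ⊆ ball (0 : EuclideanSpace ℝ (Fin N)) R)
    (hD₂R : D₂ ⊆ (ball (0 : EuclideanSpace ℝ (Fin N)) R)ᶜ)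
    (hD₂fin : volume D₂ < ⊤)
    (hvol₁ : volume (ball (0 : EuclideanSpace ℝ (Fin N)) r₁) = volume D₁)
    (hvol₂ : volume (ball (0 : EuclideanSpace ℝ (Fin N)) r₂)
      = volume (ball (0 : EuclideanSpace ℝ (Fin N)) R) + volume D₂)
    (hint : IntegrableOn (fun x => f ‖x‖) (ball (0 : EuclideanSpace ℝ (Fin N)) r₂)) :
    (∫ x in ball (0 : EuclideanSpace ℝ (Fin N)) R, f ‖x‖)
        - (∫ x in D₁, f ‖x‖) - (∫ x in D₂, f ‖x‖)
      ≥ (∫ x in ball (0 : EuclideanSpace ℝ (Fin N)) R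
            \ ball (0 : EuclideanSpace ℝ (Fin N)) r₁, f ‖x‖)
        - ∫ x in ball (0 : EuclideanSpace ℝ (Fin N)) r₂
            \ ball (0 : EuclideanSpace ℝ (Fin N)) R, f ‖x‖ :=
  combined_mass_displacement_general N hN f hmeas hnonneg hdec R r₁ r₂ hR hr₁R hr₂ D₁ D₂ hD₁ hD₂
    hD₁R hD₂R hD₂fin hvol₁ hvol₂ hint
end
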